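/- If ν(λ) = η(λ-α)/(1 - conj(α)λ) with η ∈ 𝕋, α ∈ 𝔻, and ω ∈ 𝕋, then the map f_{ω,ν}(a, λ₁+λ₂, λ₁λ₂) = (ω(1-|α|²)a / (1 - conj(α)(λ₁+λ₂) + conj(α)²λ₁λ₂), ν(λ₁)+ν(λ₂), ν(λ₁)ν(λ₂)) is well-defined on the pentablock 𝒫 (the denominator 1 - conj(α)s + conj(α)²p never vanishes on 𝒫) and maps 𝒫 into 𝒫. -/

import Mathlib

/-!
Both the pentablock bound `B(λ₁, λ₂) = ½‖1 - λ₁ λ̄₂‖ + ½ √(1 - ‖λ₁‖²) √(1 - ‖λ₂‖²)` and the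
first coordinate of `f_{ω,ν}` get multiplied by `(1 - ‖α‖²) / ‖(1 - ᾱ λ₁)(1 - ᾱ λ₂)‖`, since
the denominator of `f_{ω,ν}` factors as `(1 - ᾱ λ₁)(1 - ᾱ λ₂)` and
`(1 - ᾱ λ₁)(1 - α λ̄₂) - (λ₁ - α)(λ̄₂ - ᾱ) = (1 - ‖α‖²)(1 - λ₁ λ̄₂)`.
The unimodular factors `ω` and `η` do not change either side.
-/

open Complex Metric

def pentablock : Set (ℂ × ℂ × ℂ) :=
  {x | ∃ a l1 l2 : ℂ, l1 ∈ ball (0:ℂ) 1 ∧ l2 ∈ ball (0:ℂ) 1 ∧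
    x = (a, l1 + l2, l1 * l2) ∧
    ‖a‖ < (1/2) * ‖1 - l1 * (starRingEnd ℂ) l2‖ +
      (1/2) * Real.sqrt (1 - ‖l1‖ ^ 2) * Real.sqrt (1 - ‖l2‖ ^ 2)}

open ComplexConjugate

noncomputable def mobius (α z : ℂ) : ℂ := (z - α) / (1 - conj α * z)

lemma one_sub_conj_mul_mul_conj_sub_sub_mul_conj_sub (α z w : ℂ) :
    (1 - conj α * z) * conj (1 - conj α * w) - (z - α) * conj (w - α)
      = (1 - α * conj α) * (1 - z * conj w) := by
  simp only [map_sub, map_mul, map_one, conj_conj]; ring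

lemma sq_norm_one_sub_conj_mul_sub_sq_norm_sub (α z : ℂ) :
    ‖1 - conj α * z‖ ^ 2 - ‖z - α‖ ^ 2 = (1 - ‖α‖ ^ 2) * (1 - ‖z‖ ^ 2) := by
  simp only [Complex.sq_norm, normSq_apply, sub_re, sub_im, mul_re, mul_im, conj_re, conj_im,
    one_re, one_im]
  ring

section Mobius

variable {α : ℂ}

lemma norm_sub_lt_norm_one_sub_conj_mul (hα : ‖α‖ < 1) {z : ℂ} (hz : ‖z‖ < 1) :
    ‖z - α‖ < ‖1 - conj α * z‖ := by
  have hdiff := sq_norm_one_sub_conj_mul_sub_sq_norm_sub α z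
  have hpos : 0 < (1 - ‖α‖ ^ 2) * (1 - ‖z‖ ^ 2) := by
    apply mul_pos <;> nlinarith [norm_nonneg α, norm_nonneg z]
  exact lt_of_pow_lt_pow_left₀ 2 (norm_nonneg _) (by linarith)

lemma one_sub_conj_mul_ne_zero (hα : ‖α‖ < 1) {z : ℂ} (hz : ‖z‖ < 1) :
    1 - conj α * z ≠ 0 :=
  norm_pos_iff.mp ((norm_nonneg _).trans_lt (norm_sub_lt_norm_one_sub_conj_mul hα hz))

lemma norm_mobius_lt_one (hα : ‖α‖ < 1) {z : ℂ} (hz : ‖z‖ < 1) : ‖mobius α z‖ < 1 := by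
  rw [mobius, norm_div, div_lt_one (norm_pos_iff.mpr (one_sub_conj_mul_ne_zero hα hz))]
  exact norm_sub_lt_norm_one_sub_conj_mul hα hz

lemma one_sub_mobius_mul_conj_mobius {z w : ℂ} (hz : 1 - conj α * z ≠ 0)
    (hw : 1 - conj α * w ≠ 0) :
    1 - mobius α z * conj (mobius α w)
      = (1 - α * conj α) * (1 - z * conj w) / ((1 - conj α * z) * conj (1 - conj α * w)) := by
  rw [mobius, mobius, map_div₀, div_mul_div_comm,
    one_sub_div (mul_ne_zero hz ((map_ne_zero _).mpr hw)),
    one_sub_conj_mul_mul_conj_sub_sub_mul_conj_sub]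

lemma one_sub_sq_norm_mobius {z : ℂ} (hz : 1 - conj α * z ≠ 0) :
    1 - ‖mobius α z‖ ^ 2 = (1 - ‖α‖ ^ 2) * (1 - ‖z‖ ^ 2) / ‖1 - conj α * z‖ ^ 2 := by
  rw [← sq_norm_one_sub_conj_mul_sub_sq_norm_sub, mobius, norm_div, div_pow,
    one_sub_div (by positivity)]

end Mobius

noncomputable def pentablockBound (l1 l2 : ℂ) : ℝ :=
  1 / 2 * ‖1 - l1 * conj l2‖ + 1 / 2 * √(1 - ‖l1‖ ^ 2) * √(1 - ‖l2‖ ^ 2)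

lemma pentablockBound_comm (l1 l2 : ℂ) : pentablockBound l1 l2 = pentablockBound l2 l1 := by
  have : ‖1 - l2 * conj l1‖ = ‖1 - l1 * conj l2‖ := by
    rw [← norm_conj]; simp [mul_comm]
  simp only [pentablockBound, this]; ring

lemma pentablockBound_mul_left {η : ℂ} (hη : ‖η‖ = 1) (l1 l2 : ℂ) :
    pentablockBound (η * l1) (η * l2) = pentablockBound l1 l2 := by
  have hηη : η * conj η = 1 := by simp [mul_conj, normSq_eq_norm_sq, hη]
  have : 1 - η * l1 * conj (η * l2) = 1 - l1 * conj l2 := by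
    rw [map_mul]; linear_combination (-(l1 * conj l2)) * hηη
  simp only [pentablockBound, this, norm_mul, hη, one_mul]

lemma mk_mem_pentablock_iff {a l1 l2 : ℂ} (h1 : l1 ∈ ball (0 : ℂ) 1) (h2 : l2 ∈ ball (0 : ℂ) 1) :
    (a, l1 + l2, l1 * l2) ∈ pentablock ↔ ‖a‖ < pentablockBound l1 l2 := by
  refine ⟨?_, fun h ↦ ⟨a, l1, l2, h1, h2, rfl, h⟩⟩
  rintro ⟨a', m1, m2, -, -, heq, hlt⟩
  simp only [Prod.mk.injEq] at heq
  obtain ⟨rfl, hs, hp⟩ := heq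
  -- `{m1, m2}` and `{l1, l2}` are the root sets of the same monic quadratic
  have hroot : (m1 - l1) * (m1 - l2) = 0 := by linear_combination m1 * hs.symm - hp.symm
  rcases mul_eq_zero.mp hroot with h | h
  · obtain rfl : m1 = l1 := sub_eq_zero.mp h
    obtain rfl : m2 = l2 := by linear_combination hs.symm
    exact hlt
  · obtain rfl : m1 = l2 := sub_eq_zero.mp h
    obtain rfl : m2 = l1 := by linear_combination hs.symm
    rwa [pentablockBound_comm]

lemma pentablockBound_mobius {α l1 l2 : ℂ} (hα : ‖α‖ < 1) (h1 : ‖l1‖ < 1) (h2 : ‖l2‖ < 1) :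
    pentablockBound (mobius α l1) (mobius α l2)
      = (1 - ‖α‖ ^ 2) / (‖1 - conj α * l1‖ * ‖1 - conj α * l2‖) * pentablockBound l1 l2 := by
  have hα2 : 0 ≤ 1 - ‖α‖ ^ 2 := by nlinarith [norm_nonneg α]
  have hcoeff : 1 - α * conj α = ((1 - ‖α‖ ^ 2 : ℝ) : ℂ) := by
    rw [mul_conj, normSq_eq_norm_sq]; push_cast; ring
  have hcross : ‖1 - mobius α l1 * conj (mobius α l2)‖
      = (1 - ‖α‖ ^ 2) * ‖1 - l1 * conj l2‖ / (‖1 - conj α * l1‖ * ‖1 - conj α * l2‖) := by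
    rw [one_sub_mobius_mul_conj_mobius (one_sub_conj_mul_ne_zero hα h1)
      (one_sub_conj_mul_ne_zero hα h2), norm_div, norm_mul, norm_mul, norm_conj, hcoeff,
      norm_real, Real.norm_of_nonneg hα2]
  have hsqrt {z : ℂ} (hz : ‖z‖ < 1) : √(1 - ‖mobius α z‖ ^ 2)
      = √(1 - ‖α‖ ^ 2) * √(1 - ‖z‖ ^ 2) / ‖1 - conj α * z‖ := by
    rw [one_sub_sq_norm_mobius (one_sub_conj_mul_ne_zero hα hz), Real.sqrt_div' _ (sq_nonneg _),
      Real.sqrt_mul hα2, Real.sqrt_sq (norm_nonneg _)]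
  rw [pentablockBound, pentablockBound, hcross, hsqrt h1, hsqrt h2]
  linear_combination (1 / 2 * √(1 - ‖l1‖ ^ 2) * √(1 - ‖l2‖ ^ 2)
    / (‖1 - conj α * l1‖ * ‖1 - conj α * l2‖)) * Real.mul_self_sqrt hα2

theorem stmt18 (ω η α : ℂ) (hω : ‖ω‖ = 1) (hη : ‖η‖ = 1)
    (hα : α ∈ ball (0:ℂ) 1)
    (ν : ℂ → ℂ) (hν : ∀ l : ℂ, ν l = η * (l - α) / (1 - (starRingEnd ℂ) α * l)) :
    (∀ x ∈ pentablock, 1 - (starRingEnd ℂ) α * x.2.1 + ((starRingEnd ℂ) α) ^ 2 * x.2.2 ≠ 0) ∧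
    (∀ a l1 l2 : ℂ, l1 ∈ ball (0:ℂ) 1 → l2 ∈ ball (0:ℂ) 1 →
      ((a, l1 + l2, l1 * l2) : ℂ × ℂ × ℂ) ∈ pentablock →
      ((ω * (1 - ‖α‖ ^ 2) * a /
          (1 - (starRingEnd ℂ) α * (l1 + l2) + ((starRingEnd ℂ) α) ^ 2 * (l1 * l2)),
        ν l1 + ν l2, ν l1 * ν l2) : ℂ × ℂ × ℂ) ∈ pentablock) := by
  rw [mem_ball_zero_iff] at hα
  have hfactor (l1 l2 : ℂ) : 1 - conj α * (l1 + l2) + conj α ^ 2 * (l1 * l2)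
      = (1 - conj α * l1) * (1 - conj α * l2) := by ring
  have hν' (l : ℂ) : ν l = η * mobius α l := by rw [hν, mobius, mul_div_assoc]
  refine ⟨?_, fun a l1 l2 h1 h2 hmem ↦ ?_⟩
  · rintro x ⟨a, l1, l2, h1, h2, rfl, -⟩
    rw [mem_ball_zero_iff] at h1 h2
    exact hfactor l1 l2 ▸ mul_ne_zero (one_sub_conj_mul_ne_zero hα h1)
      (one_sub_conj_mul_ne_zero hα h2)
  rw [mk_mem_pentablock_iff h1 h2] at hmem
  rw [mem_ball_zero_iff] at h1 h2
  have hνball {l : ℂ} (hl : ‖l‖ < 1) : ν l ∈ ball (0 : ℂ) 1 := by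
    rw [mem_ball_zero_iff, hν', norm_mul, hη, one_mul]; exact norm_mobius_lt_one hα hl
  have hd : 0 < ‖1 - conj α * l1‖ * ‖1 - conj α * l2‖ := by
    simpa only [norm_mul] using norm_pos_iff.mpr
      (mul_ne_zero (one_sub_conj_mul_ne_zero hα h1) (one_sub_conj_mul_ne_zero hα h2))
  have hα2 : 0 < 1 - ‖α‖ ^ 2 := by nlinarith [norm_nonneg α]
  have hfirst : ‖ω * (1 - ‖α‖ ^ 2) * a / (1 - conj α * (l1 + l2) + conj α ^ 2 * (l1 * l2))‖
      = (1 - ‖α‖ ^ 2) / (‖1 - conj α * l1‖ * ‖1 - conj α * l2‖) * ‖a‖ := by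
    rw [hfactor, norm_div, norm_mul, norm_mul, norm_mul, hω, one_mul, ← ofReal_pow, ← ofReal_one,
      ← ofReal_sub, norm_real, Real.norm_of_nonneg hα2.le, mul_div_right_comm]
  rw [mk_mem_pentablock_iff (hνball h1) (hνball h2), hν', hν', pentablockBound_mul_left hη,
    pentablockBound_mobius hα h1 h2, hfirst]
  exact mul_lt_mul_of_pos_left hmem (div_pos hα2 hd)
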